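/- arXiv:1311.4425 — 4 statements merged into one kernel-verified Lean document; each statement's English description precedes it below -/
import Mathlib

section
/- (Combinatorial core of the cutoff 2k for uni-directional rings.) Let k ≥ 1 and m, n ≥ 2k. For every k-tuple ḡ of pairwise distinct vertices of the uni-directional ring R_m of size m there exists a k-tuple h̄ of pairwise distinct vertices of the uni-directional ring R_n of size n such that for every d ≥ 0: (i) { μ_d(v) : v a vertex of R_m } = { μ_d(w) : w a vertex of R_n }, where markings are computed with respect to ḡ in R_m and with respect to h̄ in R_n; and (ii) for all distinct markings a, b in this common set, there is an edge (u, v) of R_m with μ_d(u) = a and μ_d(v) = b if and only if there is an edge (u', v') of R_n with μ_d(u') = a and μ_d(v') = b. -/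
/-! Markings of topologies with a marked k-tuple, following the paper's
`d`-contraction construction. -/

noncomputable def dst {α : Type} (l : List α) : List α :=
  @List.destutter α (· ≠ ·) (fun _ _ => Classical.dec _) l

/-- A topology: a finite nonempty directed graph with no self-loops. -/
structure Topo where
  V : Type
  fintypeV : Fintype V
  decEqV : DecidableEq V
  nonemptyV : Nonempty V
  E : V → V → Prop
  no_self_loops : ∀ v, ¬ E v v

attribute [instance] Topo.fintypeV Topo.decEqV Topo.nonemptyV

/-- `Mark k d`: the type of `d`-th markings (independent of the topology). -/
def Mark (k : ℕ) : ℕ → Type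
  | 0 => Finset (Fin k)
  | d + 1 => Set (List (Mark k d))

def Mark.toSet {k d : ℕ} (m : Mark k (d + 1)) : Set (List (Mark k d)) := m

/-- The labeling `Λ`: `Λ (g i) = {i}` and `Λ v = ∅` for unmarked `v`
(for injective `g`). -/
def lab {k : ℕ} (G : Topo) (g : Fin k → G.V) (v : G.V) : Finset (Fin k) :=
  Finset.univ.filter fun i => g i = v

/-- `InX G g v π`: `π` is a directed path starting at `v`, ending at a marked
vertex, with all non-final vertices unmarked.  (The set `X(v)` of the paper.) -/
def InX {k : ℕ} (G : Topo) (g : Fin k → G.V) (v : G.V) (π : List G.V) : Prop :=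
  π ≠ [] ∧ π.head? = some v ∧ List.Chain' G.E π ∧
    (∀ u ∈ π.dropLast, u ∉ Set.range g) ∧
    ∃ w ∈ Set.range g, π.getLast? = some w

/-- The `d`-th marking `μ_d`. -/
noncomputable def mu {k : ℕ} (G : Topo) (g : Fin k → G.V) : (d : ℕ) → G.V → Mark k d
  | 0, v => lab G g v
  | d + 1, v => { s : List (Mark k d) | ∃ π : List G.V, InX G g v π ∧ s = dst (π.map (mu G g d)) }

/-- The uni-directional ring of size `n ≥ 2`: vertices `ZMod n`, edges `(i, i+1)`. -/
def uniRing (n : ℕ) (hn : 2 ≤ n) : Topo :=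
  haveI : NeZero n := ⟨by omega⟩
  haveI : Fact (1 < n) := ⟨by omega⟩
  { V := ZMod n
    fintypeV := inferInstance
    decEqV := inferInstance
    nonemptyV := inferInstance
    E := fun i j => j = i + 1
    no_self_loops := fun _ h => one_ne_zero (left_eq_add.mp h) }

/-- `firstMarkedFwd g v w`: `w` is the first marked vertex (i.e. vertex in the
range of `g`) in the sequence `v+1, v+2, …`. -/
def firstMarkedFwd {k : ℕ} (n : ℕ) (g : Fin k → ZMod n) (v w : ZMod n) : Prop :=
  ∃ j : ℕ, 1 ≤ j ∧ w = v + (j : ZMod n) ∧ w ∈ Set.range g ∧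
    ∀ i : ℕ, 1 ≤ i → i < j → (v + (i : ZMod n)) ∉ Set.range g

/-!
On a uni-directional ring every vertex `v` has exactly one path in `X(v)`: walk forward to the
first marked vertex. Its markings destutter to one or two letters, so by induction on `d` the
marking `μ_d(v)` depends only on the *status* of `v`: `inl i` if `v = g i`, and `inr j` if `v` is
unmarked and `g j` is the first marked vertex after it. The statuses that occur, and the status
changes along edges, are determined by the successor map `i ↦ succMark g i` on marked vertices and
by which gaps between consecutive marked vertices have length at least 2. It therefore suffices to
place `k` marked vertices on the ring of size `n` with the same successor map and the same long
gaps: shrink every gap to length `min gap 2` (at most `2k - 2` vertices before the last gap) and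
let the last gap absorb the remaining vertices. Starting at a marked vertex whose predecessor is
unmarked (one exists as `k < m`) makes that last gap long in the original ring as well.
-/

theorem List.eq_map_range_of_isChain_succ {α : Type*} [AddMonoidWithOne α] :
    ∀ {l : List α} {v : α}, l.head? = some v → l.IsChain (fun a b => b = a + 1) →
      l = (List.range l.length).map (fun t : ℕ => v + t)
  | [], _, _, _ => rfl
  | [a], v, hhead, _ => by simp_all
  | a :: b :: l, v, hhead, hchain => by
    obtain ⟨rfl, hchain⟩ := List.isChain_cons_cons.mp hchain
    obtain rfl : a = v := by simpa using hhead
    conv_lhs => rw [List.eq_map_range_of_isChain_succ (v := a + 1) rfl hchain]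
    rw [List.length_cons (a := a), List.range_succ_eq_map, List.map_cons, List.map_map,
      Nat.cast_zero, add_zero]
    congr 2
    funext t
    simp only [Function.comp, Nat.succ_eq_one_add, Nat.cast_add, Nat.cast_one, add_assoc]

theorem List.isChain_map_range_succ {α : Type*} [AddMonoidWithOne α] (v : α) (L : ℕ) :
    ((List.range L).map (fun t : ℕ => v + t)).IsChain (fun a b => b = a + 1) := by
  rw [List.isChain_map, List.isChain_range]
  intro m _
  simp [add_assoc]

theorem dst_replicate_append {α : Type} {a b : α} (hab : a ≠ b) (D : ℕ) :
    dst (List.replicate D a ++ [b]) = if D = 0 then [b] else [a, b] := by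
  let _ : DecidableRel (α := α) (· ≠ ·) := fun _ _ => Classical.dec _
  have hrep : ∀ D, (List.replicate D a ++ [b]).destutter' (· ≠ ·) a = [a, b] := by
    intro D
    induction D with
    | zero => simp [hab]
    | succ D ih =>
      rw [List.replicate_succ, List.cons_append, List.destutter'_cons_neg _ (by simp), ih]
  cases D with
  | zero => simp [dst]
  | succ D => rw [dst, List.replicate_succ, List.cons_append, List.destutter_cons', hrep]; simp

namespace MarkedRing

open Function

section Definitions

variable {k n : ℕ} (g : Fin k → ZMod n)

noncomputable def markDist (v : ZMod n) : ℕ := sInf {t : ℕ | v + (t : ZMod n) ∈ Set.range g}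

noncomputable def nextMark [Nonempty (Fin k)] (v : ZMod n) : Fin k :=
  invFun g (v + markDist g v)

noncomputable def status [Nonempty (Fin k)] (v : ZMod n) : Fin k ⊕ Fin k :=
  if markDist g v = 0 then .inl (nextMark g v) else .inr (nextMark g v)

noncomputable def gap (i : Fin k) : ℕ := markDist g (g i + 1) + 1

noncomputable def succMark [Nonempty (Fin k)] (i : Fin k) : Fin k := nextMark g (g i + 1)

end Definitions

section Distance

variable {k n : ℕ} {g : Fin k → ZMod n}

theorem markDist_le {v : ZMod n} {t : ℕ} (h : v + (t : ZMod n) ∈ Set.range g) :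
    markDist g v ≤ t :=
  Nat.sInf_le h

theorem notMem_range_of_lt_markDist {v : ZMod n} {t : ℕ} (h : t < markDist g v) :
    v + (t : ZMod n) ∉ Set.range g :=
  Nat.notMem_of_lt_sInf h

variable (g) in
theorem one_le_gap (i : Fin k) : 1 ≤ gap g i := Nat.le_add_left 1 _

theorem gap_le_of_mem_range {i : Fin k} {c : ℕ} (hc : 1 ≤ c)
    (hmem : g i + (c : ZMod n) ∈ Set.range g) : gap g i ≤ c := by
  have : markDist g (g i + 1) ≤ c - 1 :=
    markDist_le (by rwa [Nat.cast_sub hc, Nat.cast_one, add_add_sub_cancel])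
  rw [gap]; omega

variable [NeZero n] [Nonempty (Fin k)]

theorem add_markDist_mem_range (v : ZMod n) : v + (markDist g v : ZMod n) ∈ Set.range g := by
  let i : Fin k := Classical.arbitrary _
  exact Nat.sInf_mem (s := {t : ℕ | v + (t : ZMod n) ∈ Set.range g})
    ⟨(g i - v).val, i, by simp⟩

theorem le_markDist_iff {v : ZMod n} {t : ℕ} :
    t ≤ markDist g v ↔ ∀ s < t, v + (s : ZMod n) ∉ Set.range g :=
  ⟨fun h _ hs => notMem_range_of_lt_markDist (hs.trans_le h),
    fun h => not_lt.mp fun hlt => h _ hlt (add_markDist_mem_range v)⟩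

theorem markDist_eq {v : ZMod n} {t : ℕ} (hmem : v + (t : ZMod n) ∈ Set.range g)
    (hlt : ∀ s < t, v + (s : ZMod n) ∉ Set.range g) : markDist g v = t :=
  (markDist_le hmem).antisymm (le_markDist_iff.mpr hlt)

theorem markDist_eq_zero_iff {v : ZMod n} : markDist g v = 0 ↔ v ∈ Set.range g := by
  refine ⟨fun h => by simpa [h] using add_markDist_mem_range (g := g) v, fun h => ?_⟩
  exact Nat.le_zero.mp (markDist_le (by simpa using h))

theorem markDist_add {v : ZMod n} {t : ℕ} (ht : t ≤ markDist g v) :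
    markDist g (v + t) = markDist g v - t := by
  have hcast (s : ℕ) : v + (t : ZMod n) + (s : ZMod n) = v + ((t + s : ℕ) : ZMod n) := by
    push_cast; ring
  refine markDist_eq ?_ fun s hs => hcast s ▸ notMem_range_of_lt_markDist (by omega)
  rw [hcast, Nat.add_sub_cancel' ht]
  exact add_markDist_mem_range v

end Distance

section Status

variable {k n : ℕ} [Nonempty (Fin k)] {g : Fin k → ZMod n}

theorem status_succ (i : Fin k) :
    status g (g i + 1) = if gap g i = 1 then .inl (succMark g i) else .inr (succMark g i) := by
  simp only [status, gap, succMark, add_eq_right]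

variable [NeZero n]

variable (g) in
theorem apply_nextMark (v : ZMod n) : g (nextMark g v) = v + markDist g v :=
  invFun_eq (add_markDist_mem_range v)

theorem nextMark_apply (hg : Injective g) (i : Fin k) : nextMark g (g i) = i := by
  rw [nextMark, (markDist_eq_zero_iff (g := g)).mpr ⟨i, rfl⟩, Nat.cast_zero, add_zero,
    leftInverse_invFun hg i]

theorem nextMark_add {v : ZMod n} {t : ℕ} (ht : t ≤ markDist g v) :
    nextMark g (v + t) = nextMark g v := by
  rw [nextMark, nextMark, markDist_add ht, add_assoc, ← Nat.cast_add, Nat.add_sub_cancel' ht]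

variable (g) in
theorem apply_succMark (i : Fin k) : g (succMark g i) = g i + gap g i := by
  rw [succMark, apply_nextMark g, gap]
  push_cast
  ring

theorem status_add {v : ZMod n} {t : ℕ} (ht : t ≤ markDist g v) :
    status g (v + t) =
      if t = markDist g v then .inl (nextMark g v) else .inr (nextMark g v) := by
  rw [status, markDist_add ht, nextMark_add ht]
  split_ifs <;> first | rfl | omega

theorem status_apply (hg : Injective g) (i : Fin k) : status g (g i) = .inl i := by
  rw [status, if_pos ((markDist_eq_zero_iff (g := g)).mpr ⟨i, rfl⟩), nextMark_apply hg]

theorem exists_succMark_eq_nextMark {v : ZMod n} (hv : v ∉ Set.range g) :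
    ∃ i, 2 ≤ gap g i ∧ succMark g i = nextMark g v := by
  let back := {p : ℕ | v - ((p + 1 : ℕ) : ZMod n) ∈ Set.range g}
  have hback : back.Nonempty := by
    let i : Fin k := Classical.arbitrary _
    exact ⟨(v - g i - 1).val, i, by simp⟩
  -- `g i` is the last marked vertex before `v`
  obtain ⟨i, hi⟩ : sInf back ∈ back := Nat.sInf_mem hback
  set P := sInf back
  have hv' : g i + 1 + (P : ZMod n) = v := by rw [hi]; push_cast; ring
  have hunmarked : ∀ s < P + 1, g i + 1 + (s : ZMod n) ∉ Set.range g := by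
    intro s hs
    rcases (Nat.lt_succ_iff.mp hs).lt_or_eq with hlt | rfl
    · have hmin : P - 1 - s ∉ back := Nat.notMem_of_lt_sInf (by omega)
      have hback_eq : g i + 1 + (s : ZMod n) = v - ((P - 1 - s + 1 : ℕ) : ZMod n) := by
        rw [hi, show P - 1 - s + 1 = P - s by omega, Nat.cast_sub hlt.le]
        push_cast
        ring
      rwa [hback_eq]
    · rwa [hv']
  have hP := le_markDist_iff.mpr hunmarked
  refine ⟨i, by rw [gap]; omega, ?_⟩
  rw [succMark, ← hv', nextMark_add (by omega)]

theorem gap_eq_and_succMark_eq (hg : Injective g) {i i' : Fin k} {c : ℕ} (hc : 1 ≤ c)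
    (hi' : g i + (c : ZMod n) = g i')
    (hfree : ∀ t, 1 ≤ t → t < c → g i + (t : ZMod n) ∉ Set.range g) :
    gap g i = c ∧ succMark g i = i' := by
  have hcast (s : ℕ) : g i + 1 + (s : ZMod n) = g i + ((s + 1 : ℕ) : ZMod n) := by
    push_cast; ring
  have hdist : markDist g (g i + 1) = c - 1 := by
    refine markDist_eq ?_ fun s hs => hcast s ▸ hfree (s + 1) (by omega) (by omega)
    rw [hcast, Nat.sub_add_cancel hc, hi']
    exact ⟨i', rfl⟩
  refine ⟨by rw [gap, hdist]; omega, hg ?_⟩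
  rw [succMark, apply_nextMark g, hdist, hcast, Nat.sub_add_cancel hc, hi']

theorem exists_sub_one_notMem_range (hkn : k < n) : ∃ j, g j - 1 ∉ Set.range g := by
  obtain ⟨v, hv⟩ : ∃ v, v ∉ Set.range g := by
    by_contra! hsurj
    have := Fintype.card_le_of_surjective g fun v => hsurj v
    simp only [ZMod.card, Fintype.card_fin] at this
    omega
  have hpos : 1 ≤ markDist g v := Nat.one_le_iff_ne_zero.mpr (markDist_eq_zero_iff.not.mpr hv)
  refine ⟨nextMark g v, ?_⟩
  rw [apply_nextMark g, ← Nat.sub_add_cancel hpos, Nat.cast_add, Nat.cast_one, ← add_assoc,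
    add_sub_cancel_right]
  exact notMem_range_of_lt_markDist (by omega)

end Status

section Transitions

variable {k : ℕ}

def statusRange (succ : Fin k → Fin k) (long : Fin k → Prop) : Set (Fin k ⊕ Fin k) :=
  {s | (∃ i, s = .inl i) ∨ ∃ i, long i ∧ s = .inr (succ i)}

def IsStatusStep (succ : Fin k → Fin k) (long : Fin k → Prop) (s t : Fin k ⊕ Fin k) : Prop :=
  ∃ i, (¬ long i ∧ s = .inl i ∧ t = .inl (succ i)) ∨
    (long i ∧ s = .inl i ∧ t = .inr (succ i)) ∨
    (long i ∧ s = .inr (succ i) ∧ t = .inl (succ i))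

variable {n : ℕ} [NeZero n] [Nonempty (Fin k)] {g : Fin k → ZMod n}

theorem range_status (hg : Injective g) :
    Set.range (status g) = statusRange (succMark g) (2 ≤ gap g ·) := by
  ext s
  constructor
  · rintro ⟨v, rfl⟩
    by_cases hv : v ∈ Set.range g
    · obtain ⟨i, rfl⟩ := hv
      exact .inl ⟨i, status_apply hg i⟩
    · obtain ⟨i, hlong, hsucc⟩ := exists_succMark_eq_nextMark hv
      refine .inr ⟨i, hlong, ?_⟩
      rw [status, if_neg (markDist_eq_zero_iff.not.mpr hv), hsucc]
  · rintro (⟨i, rfl⟩ | ⟨i, hlong, rfl⟩)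
    · exact ⟨g i, status_apply hg i⟩
    · exact ⟨g i + 1, by rw [status_succ, if_neg (by omega)]⟩

theorem exists_status_step_iff (hg : Injective g) {s t : Fin k ⊕ Fin k} (hst : s ≠ t) :
    (∃ u, status g u = s ∧ status g (u + 1) = t) ↔
      IsStatusStep (succMark g) (2 ≤ gap g ·) s t := by
  constructor
  · rintro ⟨u, rfl, rfl⟩
    by_cases hu : u ∈ Set.range g
    · obtain ⟨i, rfl⟩ := hu
      refine ⟨i, ?_⟩
      rw [status_apply hg, status_succ]
      by_cases h1 : gap g i = 1
      · exact .inl ⟨by omega, rfl, by rw [if_pos h1]⟩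
      · exact .inr (.inl ⟨by have := one_le_gap g i; omega, rfl, by rw [if_neg h1]⟩)
    · have hpos : 1 ≤ markDist g u :=
        Nat.one_le_iff_ne_zero.mpr (markDist_eq_zero_iff.not.mpr hu)
      have hnext := status_add hpos
      rw [Nat.cast_one] at hnext
      rw [hnext, status, if_neg (by omega)] at hst ⊢
      split_ifs at hst ⊢ with h1
      · obtain ⟨i, hlong, hsucc⟩ := exists_succMark_eq_nextMark hu
        exact ⟨i, .inr (.inr ⟨hlong, by rw [hsucc], by rw [hsucc]⟩)⟩
      · exact absurd rfl hst
  · rintro ⟨i, ⟨hshort, rfl, rfl⟩ | ⟨hlong, rfl, rfl⟩ | ⟨hlong, rfl, rfl⟩⟩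
    · have hgap : gap g i = 1 := by have := one_le_gap g i; simp only at hshort; omega
      exact ⟨g i, status_apply hg i, by rw [status_succ, if_pos hgap]⟩
    · exact ⟨g i, status_apply hg i, by rw [status_succ, if_neg (by omega)]⟩
    · set M := markDist g (g i + 1)
      have hM : 1 ≤ M := by rw [gap] at hlong; omega
      refine ⟨g i + 1 + ((M - 1 : ℕ) : ZMod n), ?_, ?_⟩
      · rw [status_add (by omega), if_neg (by omega), succMark]
      · have hcast : g i + 1 + ((M - 1 : ℕ) : ZMod n) + 1 = g i + 1 + (M : ZMod n) := by
          rw [Nat.cast_sub hM]; ring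
        rw [hcast, status_add le_rfl, if_pos rfl, succMark]

end Transitions

section Markings

def statusMark (k : ℕ) : (d : ℕ) → Fin k ⊕ Fin k → Mark k d
  | 0, .inl i => ({i} : Finset (Fin k))
  | 0, .inr _ => (∅ : Finset (Fin k))
  | d + 1, .inl i => ({[statusMark k d (.inl i)]} : Set (List (Mark k d)))
  | d + 1, .inr j => ({[statusMark k d (.inr j), statusMark k d (.inl j)]} : Set (List (Mark k d)))

theorem statusMark_inr_ne_inl {k : ℕ} (d : ℕ) (i j : Fin k) :
    statusMark k d (.inr j) ≠ statusMark k d (.inl i) := by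
  cases d with
  | zero => exact (Finset.singleton_ne_empty i).symm
  | succ d =>
    exact fun h => by simpa using congrArg List.length (Set.singleton_eq_singleton_iff.mp h)

theorem map_statusMark_status_path {k n : ℕ} [NeZero n] [Nonempty (Fin k)]
    (g : Fin k → ZMod n) (d : ℕ) (v : ZMod n) :
    ((List.range (markDist g v + 1)).map (fun t : ℕ => v + (t : ZMod n))).map
        (statusMark k d ∘ status g) =
      List.replicate (markDist g v) (statusMark k d (.inr (nextMark g v))) ++
        [statusMark k d (.inl (nextMark g v))] := by
  rw [List.range_succ, List.map_append, List.map_append, List.map_map]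
  congr 1
  · refine List.eq_replicate_iff.mpr ⟨by simp, ?_⟩
    simp only [List.mem_map, List.mem_range, comp_apply]
    rintro _ ⟨t, ht, rfl⟩
    rw [status_add ht.le, if_neg ht.ne]
  · simp only [List.map_cons, List.map_nil, comp_apply]
    rw [status_add le_rfl, if_pos rfl]

variable {k n : ℕ} (hn : 2 ≤ n) [Nonempty (Fin k)] {g : Fin k → ZMod n}

theorem inX_uniRing_iff {v : ZMod n} {π : List (ZMod n)} :
    InX (uniRing n hn) g v π ↔
      π = (List.range (markDist g v + 1)).map (fun t : ℕ => v + (t : ZMod n)) := by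
  have : NeZero n := ⟨by omega⟩
  let IsPath (π : List (ZMod n)) : Prop := π ≠ [] ∧ π.head? = some v ∧
    π.IsChain (fun a b => b = a + 1) ∧ (∀ u ∈ π.dropLast, u ∉ Set.range g) ∧
    ∃ w ∈ Set.range g, π.getLast? = some w
  change IsPath π ↔ _
  have hsplit : ∀ D, (List.range (D + 1)).map (fun t : ℕ => v + (t : ZMod n)) =
      (List.range D).map (fun t : ℕ => v + (t : ZMod n)) ++ [v + D] := by
    intro D; rw [List.range_succ, List.map_append]; rfl
  have hpath : ∀ D, IsPath ((List.range (D + 1)).map (fun t : ℕ => v + (t : ZMod n))) ↔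
      markDist g v = D := by
    intro D
    simp only [IsPath]
    rw [hsplit, List.dropLast_concat, List.getLast?_concat]
    constructor
    · rintro ⟨-, -, -, hdrop, w, hw, hlast⟩
      obtain rfl := Option.some.inj hlast
      exact markDist_eq hw fun s hs => hdrop _ (List.mem_map_of_mem (List.mem_range.mpr hs))
    · rintro rfl
      refine ⟨by simp, by rw [← hsplit, List.range_succ_eq_map]; simp, ?_, ?_, _,
        add_markDist_mem_range v, rfl⟩
      · rw [← hsplit]; exact List.isChain_map_range_succ v _
      · simp only [List.mem_map, List.mem_range]
        rintro _ ⟨s, hs, rfl⟩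
        exact notMem_range_of_lt_markDist hs
  constructor
  · intro hX
    obtain ⟨hne, hhead, hchain, -⟩ := id hX
    have hπ := List.eq_map_range_of_isChain_succ hhead hchain
    obtain ⟨D, hD⟩ : ∃ D, π.length = D + 1 :=
      Nat.exists_eq_add_one.mpr (List.length_pos_iff.mpr hne)
    rw [hD] at hπ
    rw [hπ, (hpath D).mp (hπ ▸ hX)]
  · rintro rfl
    exact (hpath _).mpr rfl

theorem mu_uniRing (hg : Injective g) (d : ℕ) (v : ZMod n) :
    mu (uniRing n hn) g d v = statusMark k d (status g v) := by
  have : NeZero n := ⟨by omega⟩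
  induction d generalizing v with
  | zero =>
    change lab (uniRing n hn) g v = _
    by_cases hv : v ∈ Set.range g
    · obtain ⟨i, rfl⟩ := hv
      rw [status_apply hg]
      ext j
      simp only [lab, statusMark, Finset.mem_filter, Finset.mem_univ, true_and,
        Finset.mem_singleton]
      exact ⟨fun h => hg h, by rintro rfl; rfl⟩
    · rw [status, if_neg (markDist_eq_zero_iff.not.mpr hv)]
      ext j
      simp only [lab, statusMark, Finset.mem_filter, Finset.mem_univ, true_and,
        Finset.notMem_empty, iff_false]
      exact fun hj => hv ⟨j, hj⟩
  | succ d ih =>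
    have hmu : (mu (uniRing n hn) g d : ZMod n → Mark k d) = statusMark k d ∘ status g :=
      funext ih
    have hpaths : mu (uniRing n hn) g (d + 1) v = ({dst (List.map (α := ZMod n)
        (mu (uniRing n hn) g d)
        ((List.range (markDist g v + 1)).map (fun t : ℕ => v + (t : ZMod n))))} :
          Set (List (Mark k d))) := by
      refine Set.ext fun s => ?_
      change (∃ π, InX (uniRing n hn) g v π ∧ s = _) ↔ _
      constructor
      · rintro ⟨π, hπ, rfl⟩
        rw [(inX_uniRing_iff hn).mp hπ]
        rfl
      · rintro rfl
        exact ⟨_, (inX_uniRing_iff hn).mpr rfl, rfl⟩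
    rw [hpaths, hmu, map_statusMark_status_path g,
      dst_replicate_append (statusMark_inr_ne_inl d _ _), status]
    split_ifs <;> rfl

theorem range_mu_uniRing (hg : Injective g) (d : ℕ) :
    Set.range (mu (uniRing n hn) g d) =
      statusMark k d '' statusRange (succMark g) (2 ≤ gap g ·) := by
  have : NeZero n := ⟨by omega⟩
  rw [← range_status hg, ← Set.range_comp]
  exact congrArg Set.range (funext (mu_uniRing hn hg d))

theorem exists_edge_mu_uniRing_iff (hg : Injective g) {d : ℕ} {a b : Mark k d} (hab : a ≠ b) :
    (∃ u v : ZMod n, (uniRing n hn).E u v ∧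
        mu (uniRing n hn) g d u = a ∧ mu (uniRing n hn) g d v = b) ↔
      ∃ s t, IsStatusStep (succMark g) (2 ≤ gap g ·) s t ∧
        statusMark k d s = a ∧ statusMark k d t = b := by
  have : NeZero n := ⟨by omega⟩
  calc _ ↔ ∃ s t, (∃ u, status g u = s ∧ status g (u + 1) = t) ∧
        statusMark k d s = a ∧ statusMark k d t = b := by
        simp only [mu_uniRing hn hg]
        constructor
        · rintro ⟨u, _, rfl, ha, hb⟩
          exact ⟨_, _, ⟨u, rfl, rfl⟩, ha, hb⟩
        · rintro ⟨s, t, ⟨u, rfl, rfl⟩, ha, hb⟩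
          exact ⟨u, u + 1, rfl, ha, hb⟩
    _ ↔ _ := exists_congr fun s => exists_congr fun t => and_congr_left fun ⟨hs, ht⟩ =>
        exists_status_step_iff hg fun hst => hab (by rw [← hs, ← ht, hst])

end Markings

section Offset

variable {k m : ℕ} (g : Fin k → ZMod m) (j₀ : Fin k)

def offset (i : Fin k) : ℕ := (g i - g j₀).val

theorem offset_base : offset g j₀ j₀ = 0 := by simp [offset]

variable [NeZero m]

theorem offset_lt (i : Fin k) : offset g j₀ i < m := ZMod.val_lt _

theorem apply_eq_base_add_offset (i : Fin k) : g i = g j₀ + (offset g j₀ i : ZMod m) := by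
  simp [offset]

variable {g}

theorem offset_injective (hg : Injective g) : Injective (offset g j₀) := fun i i' h => hg <| by
  rw [apply_eq_base_add_offset g j₀ i, apply_eq_base_add_offset g j₀ i', h]

theorem offset_add_gap_le (i : Fin k) : offset g j₀ i + gap g i ≤ m := by
  have hlt := offset_lt g j₀ i
  have hmem : g i + ((m - offset g j₀ i : ℕ) : ZMod m) ∈ Set.range g :=
    ⟨j₀, by
      rw [apply_eq_base_add_offset g j₀ i, Nat.cast_sub hlt.le, ZMod.natCast_self]
      ring⟩
  have := gap_le_of_mem_range (by omega) hmem
  omega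

theorem offset_add_gap_le_of_lt {i i' : Fin k} (h : offset g j₀ i < offset g j₀ i') :
    offset g j₀ i + gap g i ≤ offset g j₀ i' := by
  have hmem : g i + ((offset g j₀ i' - offset g j₀ i : ℕ) : ZMod m) ∈ Set.range g :=
    ⟨i', by rw [apply_eq_base_add_offset g j₀ i, apply_eq_base_add_offset g j₀ i',
      Nat.cast_sub h.le]; ring⟩
  have := gap_le_of_mem_range (by omega) hmem
  omega

variable [Nonempty (Fin k)]

variable (g) in
theorem apply_succMark_eq_base_add (i : Fin k) :
    g (succMark g i) = g j₀ + ((offset g j₀ i + gap g i : ℕ) : ZMod m) := by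
  rw [apply_succMark g, apply_eq_base_add_offset g j₀ i, Nat.cast_add, add_assoc]

theorem offset_succMark {i : Fin k} (h : offset g j₀ i + gap g i < m) :
    offset g j₀ (succMark g i) = offset g j₀ i + gap g i := by
  rw [offset, apply_succMark_eq_base_add g j₀, add_sub_cancel_left, ZMod.val_natCast_of_lt h]

theorem succMark_eq_base (hg : Injective g) {i : Fin k} (h : offset g j₀ i + gap g i = m) :
    succMark g i = j₀ :=
  hg (by rw [apply_succMark_eq_base_add g j₀, h, ZMod.natCast_self, add_zero])

theorem two_le_gap_of_offset_add_gap_eq (hg : Injective g) (hj₀ : g j₀ - 1 ∉ Set.range g)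
    {i : Fin k} (h : offset g j₀ i + gap g i = m) : 2 ≤ gap g i := by
  by_contra hshort
  have hgap : gap g i = 1 := by have := one_le_gap g i; omega
  refine hj₀ ⟨i, ?_⟩
  rw [← succMark_eq_base j₀ hg h, apply_succMark g, hgap, Nat.cast_one, add_sub_cancel_right]

end Offset

section Packing

variable {k m : ℕ} (g : Fin k → ZMod m) (j₀ : Fin k)

noncomputable def cappedGap (i : Fin k) : ℕ := min (gap g i) 2

/-- The offset of `g i` after every gap between `g j₀` and `g i` has been shrunk to its
`cappedGap`. -/
noncomputable def packedOffset (i : Fin k) : ℕ :=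
  ∑ i' ∈ Finset.univ.filter (fun i' => offset g j₀ i' < offset g j₀ i), cappedGap g i'

theorem one_le_cappedGap (i : Fin k) : 1 ≤ cappedGap g i :=
  le_min (one_le_gap g i) one_le_two

theorem packedOffset_base : packedOffset g j₀ j₀ = 0 := by
  simp [packedOffset, offset_base]

theorem packedOffset_add_cappedGap_le_two_mul (i : Fin k) :
    packedOffset g j₀ i + cappedGap g i ≤ 2 * k := by
  have hi : i ∉ Finset.univ.filter (fun i' => offset g j₀ i' < offset g j₀ i) := by simp
  rw [packedOffset, add_comm, ← Finset.sum_insert hi]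
  calc _ ≤ ∑ i' : Fin k, cappedGap g i' := Finset.sum_le_sum_of_subset (Finset.subset_univ _)
    _ ≤ Finset.univ.card • 2 := Finset.sum_le_card_nsmul _ _ _ fun _ _ => min_le_right _ _
    _ = 2 * k := by simp [mul_comm]

variable {g} {j₀}

theorem packedOffset_add_cappedGap_le {i i' : Fin k} (h : offset g j₀ i < offset g j₀ i') :
    packedOffset g j₀ i + cappedGap g i ≤ packedOffset g j₀ i' := by
  have hi : i ∉ Finset.univ.filter (fun i'' => offset g j₀ i'' < offset g j₀ i) := by simp
  rw [packedOffset, add_comm, ← Finset.sum_insert hi]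
  refine Finset.sum_le_sum_of_subset fun i'' hi'' => ?_
  simp only [Finset.mem_insert, Finset.mem_filter, Finset.mem_univ, true_and] at hi'' ⊢
  rcases hi'' with rfl | hlt
  · exact h
  · exact hlt.trans h

variable [NeZero m]

theorem packedOffset_separated (hg : Injective g) {i i' : Fin k} (hne : i ≠ i') :
    packedOffset g j₀ i + cappedGap g i ≤ packedOffset g j₀ i' ∨
      packedOffset g j₀ i' + cappedGap g i' ≤ packedOffset g j₀ i := by
  rcases lt_or_gt_of_ne ((offset_injective j₀ hg).ne hne) with h | h
  · exact .inl (packedOffset_add_cappedGap_le h)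
  · exact .inr (packedOffset_add_cappedGap_le h)

theorem packedOffset_le_of_offset_add_gap_eq (hg : Injective g) {i : Fin k}
    (h : offset g j₀ i + gap g i = m) (i' : Fin k) :
    packedOffset g j₀ i' ≤ packedOffset g j₀ i := by
  rcases lt_trichotomy (offset g j₀ i') (offset g j₀ i) with hlt | heq | hgt
  · have := packedOffset_add_cappedGap_le hlt; omega
  · rw [offset_injective j₀ hg heq]
  · have := offset_add_gap_le_of_lt j₀ hgt
    have := offset_lt g j₀ i'
    omega

theorem packedOffset_succMark [Nonempty (Fin k)] (hg : Injective g) {i : Fin k}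
    (h : offset g j₀ i + gap g i < m) :
    packedOffset g j₀ (succMark g i) = packedOffset g j₀ i + cappedGap g i := by
  have hfilter : Finset.univ.filter (fun i' => offset g j₀ i' < offset g j₀ (succMark g i)) =
      insert i (Finset.univ.filter (fun i' => offset g j₀ i' < offset g j₀ i)) := by
    ext i'
    simp only [Finset.mem_insert, Finset.mem_filter, Finset.mem_univ, true_and,
      offset_succMark j₀ h]
    constructor
    · intro hi'
      rcases lt_trichotomy (offset g j₀ i') (offset g j₀ i) with hlt | heq | hgt
      · exact .inr hlt
      · exact .inl (offset_injective j₀ hg heq)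
      · have := offset_add_gap_le_of_lt j₀ hgt; omega
    · rintro (rfl | hlt)
      · have := one_le_gap g i'; omega
      · omega
  rw [packedOffset, hfilter, Finset.sum_insert (by simp), add_comm, packedOffset]

end Packing

section Construction

variable {k m : ℕ} (n : ℕ) (g : Fin k → ZMod m) (j₀ : Fin k)

noncomputable def packedMarking (i : Fin k) : ZMod n := (packedOffset g j₀ i : ZMod n)

variable {n g j₀}

theorem packedOffset_eq_of_packedMarking_eq (hn : 2 * k ≤ n) {i : Fin k} {a : ℕ}
    (h : packedMarking n g j₀ i = (a : ZMod n)) (ha : a < n) : packedOffset g j₀ i = a := by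
  have hi := packedOffset_add_cappedGap_le_two_mul g j₀ i
  have := one_le_cappedGap g i
  rwa [packedMarking, ZMod.natCast_eq_natCast_iff', Nat.mod_eq_of_lt (by omega),
    Nat.mod_eq_of_lt ha] at h

variable [NeZero m]

theorem packedMarking_injective (hn : 2 * k ≤ n) (hg : Injective g) :
    Injective (packedMarking n g j₀) := by
  intro i i' h
  by_contra hne
  have hi := packedOffset_add_cappedGap_le_two_mul g j₀ i
  have hi' := packedOffset_add_cappedGap_le_two_mul g j₀ i'
  have := one_le_cappedGap g i
  have := one_le_cappedGap g i'
  have := packedOffset_eq_of_packedMarking_eq hn h (by omega)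
  have := packedOffset_separated (j₀ := j₀) hg hne
  omega

variable [NeZero n] [Nonempty (Fin k)]

theorem gap_packedMarking_of_lt (hn : 2 * k ≤ n) (hg : Injective g) {i : Fin k}
    (h : offset g j₀ i + gap g i < m) :
    gap (packedMarking n g j₀) i = cappedGap g i ∧
      succMark (packedMarking n g j₀) i = succMark g i := by
  have hi := packedOffset_add_cappedGap_le_two_mul g j₀ i
  refine gap_eq_and_succMark_eq (packedMarking_injective hn hg) (one_le_cappedGap g i) ?_ ?_
  · rw [packedMarking, packedMarking, packedOffset_succMark hg h, Nat.cast_add]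
  · rintro t ht1 ht ⟨i', hi'⟩
    simp only [packedMarking, ← Nat.cast_add] at hi'
    have hP := packedOffset_eq_of_packedMarking_eq hn hi' (by omega)
    have hne : i' ≠ i := by rintro rfl; omega
    have := packedOffset_separated (j₀ := j₀) hg hne
    omega

theorem gap_packedMarking_of_eq (hn : 2 * k ≤ n) (hg : Injective g)
    (hj₀ : g j₀ - 1 ∉ Set.range g) {i : Fin k} (h : offset g j₀ i + gap g i = m) :
    2 ≤ gap (packedMarking n g j₀) i ∧
      succMark (packedMarking n g j₀) i = succMark g i := by
  have hi := packedOffset_add_cappedGap_le_two_mul g j₀ i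
  have hcap : cappedGap g i = 2 := min_eq_right (two_le_gap_of_offset_add_gap_eq j₀ hg hj₀ h)
  have hwrap : packedMarking n g j₀ i + ((n - packedOffset g j₀ i : ℕ) : ZMod n) =
      packedMarking n g j₀ j₀ := by
    rw [packedMarking, packedMarking, packedOffset_base, ← Nat.cast_add,
      Nat.add_sub_cancel' (by omega), ZMod.natCast_self, Nat.cast_zero]
  have hfree : ∀ t, 1 ≤ t → t < n - packedOffset g j₀ i →
      packedMarking n g j₀ i + (t : ZMod n) ∉ Set.range (packedMarking n g j₀) := by
    rintro t ht1 ht ⟨i', hi'⟩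
    simp only [packedMarking, ← Nat.cast_add] at hi'
    have := packedOffset_eq_of_packedMarking_eq hn hi' (by omega)
    have := packedOffset_le_of_offset_add_gap_eq hg h i'
    omega
  obtain ⟨hgap, hsucc⟩ :=
    gap_eq_and_succMark_eq (packedMarking_injective hn hg) (by omega) hwrap hfree
  exact ⟨by omega, hsucc.trans (succMark_eq_base j₀ hg h).symm⟩

theorem exists_injective_same_succMark_and_long_gaps (hn : 2 * k ≤ n) (hkm : k < m)
    (hg : Injective g) :
    ∃ h : Fin k → ZMod n, Injective h ∧ succMark h = succMark g ∧
      (2 ≤ gap h ·) = (2 ≤ gap g ·) := by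
  obtain ⟨j₀, hj₀⟩ := exists_sub_one_notMem_range (g := g) hkm
  have key : ∀ i, succMark (packedMarking n g j₀) i = succMark g i ∧
      (2 ≤ gap (packedMarking n g j₀) i ↔ 2 ≤ gap g i) := by
    intro i
    rcases (offset_add_gap_le (g := g) j₀ i).lt_or_eq with hlt | heq
    · obtain ⟨hgap, hsucc⟩ := gap_packedMarking_of_lt hn hg hlt
      exact ⟨hsucc, by rw [hgap, cappedGap, le_min_iff]; simp⟩
    · obtain ⟨hlong, hsucc⟩ := gap_packedMarking_of_eq hn hg hj₀ heq
      exact ⟨hsucc, iff_of_true hlong (two_le_gap_of_offset_add_gap_eq j₀ hg hj₀ heq)⟩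
  exact ⟨packedMarking n g j₀, packedMarking_injective hn hg, funext fun i => (key i).1,
    funext fun i => propext (key i).2⟩

end Construction

end MarkedRing

/-- combinatorial core of the cutoff `2k` for uni-rings: for rings
of sizes `m, n ≥ 2k` and any marked tuple `ḡ` in the ring of size `m` there is a
marked tuple `h̄` in the ring of size `n` with the same set of `d`-markings for
every `d`, and with matching marking-labeled edges. -/
theorem stmt7 {k m n : ℕ} (hk : 1 ≤ k) (hm : 2 * k ≤ m) (hn : 2 * k ≤ n)
    (hm2 : 2 ≤ m) (hn2 : 2 ≤ n)
    (g : Fin k → ZMod m) (hg : Function.Injective g) :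
    ∃ h : Fin k → ZMod n, Function.Injective h ∧
      ∀ d : ℕ,
        (Set.range (mu (uniRing m hm2) g d) = Set.range (mu (uniRing n hn2) h d)) ∧
        (∀ a b : Mark k d,
          a ∈ Set.range (mu (uniRing m hm2) g d) →
          b ∈ Set.range (mu (uniRing m hm2) g d) → a ≠ b →
          ((∃ u v : ZMod m, (uniRing m hm2).E u v ∧
              mu (uniRing m hm2) g d u = a ∧ mu (uniRing m hm2) g d v = b) ↔
           (∃ u v : ZMod n, (uniRing n hn2).E u v ∧
              mu (uniRing n hn2) h d u = a ∧ mu (uniRing n hn2) h d v = b))) := by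
  have : NeZero m := ⟨by omega⟩
  have : NeZero n := ⟨by omega⟩
  have : Nonempty (Fin k) := ⟨⟨0, hk⟩⟩
  obtain ⟨h, hh, hsucc, hlong⟩ :=
    MarkedRing.exists_injective_same_succMark_and_long_gaps hn (by omega) hg
  refine ⟨h, hh, fun d => ⟨?_, fun a b _ _ hab => ?_⟩⟩
  · rw [MarkedRing.range_mu_uniRing hm2 hg, MarkedRing.range_mu_uniRing hn2 hh, hsucc, hlong]
  · rw [MarkedRing.exists_edge_mu_uniRing_iff hm2 hg hab,
      MarkedRing.exists_edge_mu_uniRing_iff hn2 hh hab, hsucc, hlong]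
end

section
/- (Combinatorial core of the cutoff k+1 for cliques.) Let k ≥ 1 and m, n ≥ k + 1, and let ḡ and h̄ be arbitrary k-tuples of pairwise distinct vertices of the cliques of sizes m and n, respectively. Then for every d ≥ 0: (i) { μ_d(v) : v a vertex of the clique of size m } = { μ_d(w) : w a vertex of the clique of size n }, where markings are computed with respect to ḡ and h̄ respectively; and (ii) for any two distinct markings a, b in this common set, there is an edge (u, v) in the clique of size m with μ_d(u) = a and μ_d(v) = b, and likewise there is such an edge in the clique of size n. -/
/-- The clique of size `n`: vertices `Fin n`, edges between all pairs of
distinct vertices. -/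
def clique (n : ℕ) (hn : 0 < n) : Topo :=
  haveI : NeZero n := ⟨by omega⟩
  { V := Fin n
    fintypeV := inferInstance
    decEqV := inferInstance
    nonemptyV := ⟨0⟩
    E := fun i j => i ≠ j
    no_self_loops := fun _ h => h rfl }

/-!
A path in `X(g i)` stops at its first vertex, so `μ_d (g i)` is a marking `Mark.marked k d i`
that does not depend on the graph. If moreover every unmarked vertex has an edge to every marked
one, a path in `X(v)` from an unmarked `v` is a nonempty run of unmarked vertices followed by some
`g j`; by induction on `d` its image under `μ_d` destutters to `[Mark.unmarked k d, Mark.marked k d j]`,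
and each such list comes from the path `[v, g j]`. So all unmarked vertices share the graph-independent
marking `Mark.unmarked k (d + 1)`, and once some vertex is unmarked the set of `d`-markings is the same for
every such graph. In a clique, distinct markings sit at distinct, hence adjacent, vertices.
-/

section Destutter

variable {α : Type}

lemma dst_singleton (a : α) : dst [a] = [a] := rfl

lemma dst_pair {a b : α} (hab : a ≠ b) : dst [a, b] = [a, b] := by
  unfold dst
  rw [List.destutter_pair, if_pos hab]

lemma dst_append_singleton_of_forall_eq {a b : α} {l : List α} (hl : l ≠ [])
    (hla : ∀ x ∈ l, x = a) (hab : a ≠ b) : dst (l ++ [b]) = [a, b] := by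
  obtain ⟨x, l, rfl⟩ := List.exists_cons_of_ne_nil hl
  obtain rfl := hla x List.mem_cons_self
  replace hla : ∀ y ∈ l, y = x := fun y hy => hla y (List.mem_cons_of_mem x hy)
  unfold dst
  rw [List.cons_append, List.destutter_cons']
  clear hl
  induction l with
  | nil => rw [List.nil_append, List.destutter'_singleton, if_pos hab]
  | cons y l ih =>
    obtain rfl := hla y List.mem_cons_self
    rw [List.cons_append, List.destutter', if_neg (not_not.2 rfl)]
    exact ih fun z hz => hla z (List.mem_cons_of_mem y hz)

end Destutter

namespace Mark

noncomputable def marked (k : ℕ) : (d : ℕ) → Fin k → Mark k d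
  | 0, i => ({i} : Finset (Fin k))
  | d + 1, i => ({[marked k d i]} : Set (List (Mark k d)))

noncomputable def unmarked (k : ℕ) : (d : ℕ) → Mark k d
  | 0 => (∅ : Finset (Fin k))
  | d + 1 => {l : List (Mark k d) | ∃ j, l = [unmarked k d, marked k d j]}

lemma marked_ne_unmarked (k d : ℕ) (i : Fin k) : marked k d i ≠ unmarked k d := by
  cases d with
  | zero => exact Finset.singleton_ne_empty i
  | succ d =>
    intro hEq
    have hmem : [marked k d i] ∈ (unmarked k (d + 1)).toSet :=
      by rw [← hEq]; exact Set.mem_singleton _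
    obtain ⟨j, hj⟩ := hmem
    simp at hj

end Mark

section Markings

variable {k : ℕ} {G : Topo} {g : Fin k → G.V}

lemma inX_singleton (i : Fin k) : InX G g (g i) [g i] :=
  ⟨List.cons_ne_nil _ _, rfl, List.isChain_singleton _, by simp, g i, ⟨i, rfl⟩, rfl⟩

lemma inX_pair {v : G.V} (hv : v ∉ Set.range g) {j : Fin k} (hE : G.E v (g j)) :
    InX G g v [v, g j] :=
  ⟨List.cons_ne_nil _ _, rfl, List.isChain_pair.2 hE, by simpa using hv, g j, ⟨j, rfl⟩, rfl⟩

lemma InX.eq_singleton {i : Fin k} {π : List G.V} (hπ : InX G g (g i) π) : π = [g i] := by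
  obtain ⟨hne, hhead, -, hdrop, -⟩ := hπ
  obtain ⟨x, l, rfl⟩ := List.exists_cons_of_ne_nil hne
  obtain rfl : x = g i := Option.some.inj hhead
  cases l with
  | nil => rfl
  | cons y l => exact absurd ⟨i, rfl⟩ (hdrop (g i) (by simp))

lemma InX.exists_eq_append {v : G.V} (hv : v ∉ Set.range g) {π : List G.V}
    (hπ : InX G g v π) :
    ∃ l j, π = l ++ [g j] ∧ l ≠ [] ∧ ∀ u ∈ l, u ∉ Set.range g := by
  obtain ⟨-, hhead, -, hdrop, -, ⟨j, rfl⟩, hlast⟩ := hπ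
  obtain ⟨l, rfl⟩ := List.getLast?_eq_some_iff.1 hlast
  rw [List.dropLast_concat] at hdrop
  refine ⟨l, j, rfl, fun hnil => hv ⟨j, ?_⟩, hdrop⟩
  subst hnil
  exact Option.some.inj hhead

lemma mem_mu_succ {d : ℕ} {v : G.V} {s : List (Mark k d)} :
    s ∈ (mu G g (d + 1) v).toSet ↔ ∃ π, InX G g v π ∧ s = dst (π.map (mu G g d)) :=
  Iff.rfl

lemma mu_apply_marked (hg : Function.Injective g) (d : ℕ) (i : Fin k) :
    mu G g d (g i) = Mark.marked k d i := by
  induction d with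
  | zero =>
    show lab G g (g i) = {i}
    ext j
    simp [lab, hg.eq_iff]
  | succ d ih =>
    show (mu G g (d + 1) (g i)).toSet = {[Mark.marked k d i]}
    ext s
    rw [mem_mu_succ, Set.mem_singleton_iff]
    constructor
    · rintro ⟨π, hπ, rfl⟩
      rw [hπ.eq_singleton, List.map_singleton, ih, dst_singleton]
    · rintro rfl
      exact ⟨[g i], inX_singleton i, by rw [List.map_singleton, ih, dst_singleton]⟩

lemma mu_apply_unmarked (hg : Function.Injective g)
    (hadj : ∀ v ∉ Set.range g, ∀ j, G.E v (g j)) (d : ℕ) {v : G.V} (hv : v ∉ Set.range g) :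
    mu G g d v = Mark.unmarked k d := by
  induction d generalizing v with
  | zero =>
    show lab G g v = ∅
    ext j
    simpa [lab] using fun hj => hv ⟨j, hj⟩
  | succ d ih =>
    have hne : ∀ j, Mark.unmarked k d ≠ Mark.marked k d j :=
      fun j => (Mark.marked_ne_unmarked k d j).symm
    show (mu G g (d + 1) v).toSet = {l | ∃ j, l = [Mark.unmarked k d, Mark.marked k d j]}
    ext s
    rw [mem_mu_succ, Set.mem_ofPred_eq]
    constructor
    · rintro ⟨π, hπ, rfl⟩
      obtain ⟨l, j, rfl, hl, hlu⟩ := hπ.exists_eq_append hv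
      refine ⟨j, ?_⟩
      rw [List.map_append, List.map_singleton, mu_apply_marked hg]
      refine dst_append_singleton_of_forall_eq (by simpa using hl) ?_ (hne j)
      simp only [List.mem_map]
      rintro _ ⟨u, hu, rfl⟩
      exact ih (hlu u hu)
    · rintro ⟨j, rfl⟩
      refine ⟨[v, g j], inX_pair hv (hadj v hv j), ?_⟩
      rw [List.map_cons, List.map_singleton, ih hv, mu_apply_marked hg, dst_pair (hne j)]

lemma range_mu (hg : Function.Injective g) (hadj : ∀ v ∉ Set.range g, ∀ j, G.E v (g j))
    (hcard : k < Fintype.card G.V) (d : ℕ) :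
    Set.range (mu G g d) = insert (Mark.unmarked k d) (Set.range (Mark.marked k d)) := by
  ext a
  constructor
  · rintro ⟨v, rfl⟩
    by_cases hv : v ∈ Set.range g
    · obtain ⟨i, rfl⟩ := hv
      exact Or.inr ⟨i, (mu_apply_marked hg d i).symm⟩
    · exact Or.inl (mu_apply_unmarked hg hadj d hv)
  · rintro (rfl | ⟨i, rfl⟩)
    · obtain ⟨v, hv⟩ : ∃ v, v ∉ Set.range g := by
        by_contra! hsurj
        have := Fintype.card_le_of_surjective g hsurj
        simp only [Fintype.card_fin] at this
        omega
      exact ⟨v, mu_apply_unmarked hg hadj d hv⟩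
    · exact ⟨g i, mu_apply_marked hg d i⟩

end Markings

lemma range_mu_clique {k m : ℕ} (hm : 0 < m) (hkm : k + 1 ≤ m) {g : Fin k → Fin m}
    (hg : Function.Injective g) (d : ℕ) :
    Set.range (mu (clique m hm) g d) = insert (Mark.unmarked k d) (Set.range (Mark.marked k d)) :=
  range_mu hg (fun _ hv j hvj => hv ⟨j, hvj.symm⟩) (by rw [show Fintype.card (clique m hm).V = m from Fintype.card_fin m]; omega) d

lemma exists_clique_edge_of_ne {α : Type*} {m : ℕ} (hm : 0 < m) {f : Fin m → α} {a b : α}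
    (ha : a ∈ Set.range f) (hb : b ∈ Set.range f) (hab : a ≠ b) :
    ∃ u v : Fin m, (clique m hm).E u v ∧ f u = a ∧ f v = b := by
  obtain ⟨u, rfl⟩ := ha
  obtain ⟨v, rfl⟩ := hb
  exact ⟨u, v, fun huv => hab (congrArg f huv), rfl, rfl⟩

theorem stmt9_general {k m n : ℕ} (hkm : k + 1 ≤ m) (hkn : k + 1 ≤ n)
    (hm : 0 < m) (hn : 0 < n)
    (g : Fin k → Fin m) (hg : Function.Injective g)
    (h : Fin k → Fin n) (hh : Function.Injective h) (d : ℕ) :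
    (Set.range (mu (clique m hm) g d) = Set.range (mu (clique n hn) h d)) ∧
    (∀ a b : Mark k d,
      a ∈ Set.range (mu (clique m hm) g d) →
      b ∈ Set.range (mu (clique m hm) g d) → a ≠ b →
      (∃ u v : Fin m, (clique m hm).E u v ∧
          mu (clique m hm) g d u = a ∧ mu (clique m hm) g d v = b) ∧
      (∃ u v : Fin n, (clique n hn).E u v ∧
          mu (clique n hn) h d u = a ∧ mu (clique n hn) h d v = b)) := by
  have hrange : Set.range (mu (clique m hm) g d) = Set.range (mu (clique n hn) h d) := by
    rw [range_mu_clique hm hkm hg, range_mu_clique hn hkn hh]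
  refine ⟨hrange, fun a b ha hb hab => ⟨exists_clique_edge_of_ne hm ha hb hab, ?_⟩⟩
  rw [hrange] at ha hb
  exact exists_clique_edge_of_ne hn ha hb hab

/-- combinatorial core of the cutoff `k + 1` for cliques: any two
marked tuples in cliques of sizes `m, n ≥ k + 1` yield the same set of
`d`-markings for every `d`, and every pair of distinct markings in this set is
realized by an edge in both cliques. -/
theorem stmt9 {k m n : ℕ} (hk : 1 ≤ k) (hkm : k + 1 ≤ m) (hkn : k + 1 ≤ n)
    (hm : 0 < m) (hn : 0 < n)
    (g : Fin k → Fin m) (hg : Function.Injective g)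
    (h : Fin k → Fin n) (hh : Function.Injective h) (d : ℕ) :
    (Set.range (mu (clique m hm) g d) = Set.range (mu (clique n hn) h d)) ∧
    (∀ a b : Mark k d,
      a ∈ Set.range (mu (clique m hm) g d) →
      b ∈ Set.range (mu (clique m hm) g d) → a ≠ b →
      (∃ u v : Fin m, (clique m hm).E u v ∧
          mu (clique m hm) g d u = a ∧ mu (clique m hm) g d v = b) ∧
      (∃ u v : Fin n, (clique n hn).E u v ∧
          mu (clique n hn) h d u = a ∧ mu (clique n hn) h d v = b)) :=
  stmt9_general hkm hkn hm hn g hg h hh d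
end

section
/- (The token itinerary is a walk.) Let P be a process template, G a topology with initial vertex x, and s₀ … s_T a finite run of P^G with holder itinerary h₀ … h_T (for each t, h_t is a vertex with tok(s_t(h_t))). Then h₀ = x, and for every t < T either h_{t+1} = h_t or (h_t, h_{t+1}) ∈ E; consequently List.destutter (· ≠ ·) [h₀, …, h_T] is a walk in G from x. -/
/-- Actions of a process: internal actions from `A = Σint`, plus `snd`, `rcv`. -/
inductive Act (A : Type) where
  | int : A → Act A
  | snd : Act A
  | rcv : Act A

/-- A process template `P = (Q, δ, tok, ιt, ιn)`.  The field `alternation`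
encodes that every infinite action-labeled path of `P` lies in
`(Σint* snd Σint* rcv)^ω ∪ (Σint* rcv Σint* snd)^ω`: every infinite path has
infinitely many non-internal actions, between any two `snd`s there is a `rcv`,
and between any two `rcv`s there is a `snd`. -/
structure ProcTemplate (A : Type) where
  Q : Type
  fintypeQ : Fintype Q
  decEqQ : DecidableEq Q
  tok : Q → Prop
  iotaT : Q
  iotaN : Q
  tok_iotaT : tok iotaT
  not_tok_iotaN : ¬ tok iotaN
  δ : Q → Act A → Q → Prop
  snd_tok : ∀ {q q'}, δ q Act.snd q' → tok q ∧ ¬ tok q'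
  rcv_tok : ∀ {q q'}, δ q Act.rcv q' → ¬ tok q ∧ tok q'
  int_tok : ∀ {q a q'}, δ q (Act.int a) q' → (tok q ↔ tok q')
  total : ∀ q, ∃ σ q', δ q σ q'
  alternation : ∀ (q : ℕ → Q) (a : ℕ → Act A),
    (∀ t, δ (q t) (a t) (q (t + 1))) →
      (∀ t, ∃ t', t ≤ t' ∧ (a t' = Act.snd ∨ a t' = Act.rcv)) ∧
      (∀ t₁ t₂, t₁ < t₂ → a t₁ = Act.snd → a t₂ = Act.snd →
        ∃ t, t₁ < t ∧ t < t₂ ∧ a t = Act.rcv) ∧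
      (∀ t₁ t₂, t₁ < t₂ → a t₁ = Act.rcv → a t₂ = Act.rcv →
        ∃ t, t₁ < t ∧ t < t₂ ∧ a t = Act.snd)

attribute [instance] ProcTemplate.fintypeQ ProcTemplate.decEqQ

/-- The initial global state of `P^G` with initial vertex `x`. -/
def gInit {A : Type} (P : ProcTemplate A) (G : Topo) (x : G.V) : G.V → P.Q :=
  fun v => if v = x then P.iotaT else P.iotaN

/-- Internal transitions of `P^G`: one process moves via an internal action. -/
def IntTrans {A : Type} (P : ProcTemplate A) (G : Topo) (s s' : G.V → P.Q) : Prop :=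
  ∃ v a, P.δ (s v) (Act.int a) (s' v) ∧ ∀ w, w ≠ v → s' w = s w

/-- Token-passing transitions of `P^G`: a process sends the token to another
along an edge of `G`. -/
def TokTrans {A : Type} (P : ProcTemplate A) (G : Topo) (s s' : G.V → P.Q) : Prop :=
  ∃ v w, G.E v w ∧ P.δ (s v) Act.snd (s' v) ∧ P.δ (s w) Act.rcv (s' w) ∧
    ∀ u, u ≠ v → u ≠ w → s' u = s u

/-- Global transitions of `P^G`. -/
def GStep {A : Type} (P : ProcTemplate A) (G : Topo) (s s' : G.V → P.Q) : Prop :=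
  IntTrans P G s s' ∨ TokTrans P G s s'

/-- A finite run of `P^G` (as a nonempty list of global states starting at the
initial state, consecutive states related by transitions). -/
def IsFinRun {A : Type} (P : ProcTemplate A) (G : Topo) (x : G.V)
    (ρ : List (G.V → P.Q)) : Prop :=
  ρ ≠ [] ∧ ρ.head? = some (gInit P G x) ∧ List.Chain' (GStep P G) ρ

/-- A walk in `G` from `x`: a nonempty list of vertices starting at `x` with an
edge between consecutive entries. -/
def IsWalkFrom (G : Topo) (x : G.V) (w : List G.V) : Prop :=
  w ≠ [] ∧ w.head? = some x ∧ List.Chain' G.E w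

/-- The `ḡ`-projection trace of a finite run: the list of `k`-tuples of local
states of the processes at the marked vertices. -/
def projTrace {A : Type} {k : ℕ} (P : ProcTemplate A) (G : Topo)
    (g : Fin k → G.V) (ρ : List (G.V → P.Q)) : List (Fin k → P.Q) :=
  ρ.map fun s i => s (g i)


/-! Every transition of `P^G` maps a state with exactly one token holder to such a state:
an internal move leaves the set of holders unchanged, and a token-passing move along an edge
`(v, w)` replaces the holder `v` by `w`. Since the initial state has the single holder `x`,
consecutive holders of a run are equal or adjacent, and removing repetitions leaves a walk. -/

namespace List

variable {α : Type*}

theorem head?_destutter' (R : α → α → Prop) [DecidableRel R] (a : α) (l : List α) :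
    (l.destutter' R a).head? = some a := by
  induction l with
  | nil => rfl
  | cons b l ih =>
    rw [destutter'_cons]
    split
    · rfl
    · exact ih

theorem head?_destutter (R : α → α → Prop) [DecidableRel R] (l : List α) :
    (l.destutter R).head? = l.head? := by
  cases l with
  | nil => rfl
  | cons a l => exact head?_destutter' R a l

theorem isChain_destutter'_ne [DecidableEq α] {R : α → α → Prop} {a : α} {l : List α}
    (hl : (a :: l).IsChain (fun x y => x = y ∨ R x y)) :
    (l.destutter' (· ≠ ·) a).IsChain R := by
  induction l generalizing a with
  | nil => exact isChain_singleton a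
  | cons b l ih =>
    obtain ⟨hab, hl⟩ := isChain_cons_cons.mp hl
    by_cases h : a = b
    · subst h
      rw [destutter'_cons, if_neg (not_not_intro rfl)]
      exact ih hl
    · rw [destutter'_cons, if_pos h, isChain_cons, head?_destutter']
      exact ⟨fun c hc => Option.some_inj.mp hc ▸ hab.resolve_left h, ih hl⟩

theorem isChain_destutter_ne [DecidableEq α] {R : α → α → Prop} {l : List α}
    (hl : l.IsChain (fun x y => x = y ∨ R x y)) : (l.destutter (· ≠ ·)).IsChain R := by
  cases l with
  | nil => exact isChain_nil
  | cons a l => exact isChain_destutter'_ne hl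

end List

open List

theorem dst_eq_destutter {α : Type} [DecidableEq α] (l : List α) :
    dst l = l.destutter (· ≠ ·) := by
  unfold dst
  congr

theorem isWalkFrom_dst {G : Topo} {x : G.V} {l : List G.V} (hx : l.head? = some x)
    (hl : l.IsChain (fun a b => a = b ∨ G.E a b)) : IsWalkFrom G x (dst l) := by
  rw [dst_eq_destutter]
  refine ⟨?_, ?_, isChain_destutter_ne hl⟩
  · rw [Ne, destutter_eq_nil]
    rintro rfl
    cases hx
  · rwa [head?_destutter]

section TokenHolders

variable {A : Type} {P : ProcTemplate A} {G : Topo}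

def tokenHolders (P : ProcTemplate A) {V : Type} (s : V → P.Q) : Set V :=
  {v | P.tok (s v)}

theorem tokenHolders_gInit (x : G.V) : tokenHolders P (gInit P G x) = {x} := by
  ext v
  by_cases hv : v = x
  · simpa [tokenHolders, gInit, hv] using P.tok_iotaT
  · simpa [tokenHolders, gInit, hv] using P.not_tok_iotaN

theorem IntTrans.tokenHolders_eq {s s' : G.V → P.Q} (hs : IntTrans P G s s') :
    tokenHolders P s' = tokenHolders P s := by
  obtain ⟨v, a, hδ, hrest⟩ := hs
  ext u
  by_cases hu : u = v
  · subst hu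
    exact (P.int_tok hδ).symm
  · show P.tok (s' u) ↔ P.tok (s u)
    rw [hrest u hu]

theorem TokTrans.exists_adj_tokenHolders_eq_singleton {s s' : G.V → P.Q} {v : G.V}
    (hs : TokTrans P G s s') (hv : tokenHolders P s = {v}) :
    ∃ w, G.E v w ∧ tokenHolders P s' = {w} := by
  obtain ⟨v₁, w, hE, hsnd, hrcv, hrest⟩ := hs
  have hv₁ : v₁ = v := hv.subset (P.snd_tok hsnd).1
  subst hv₁
  refine ⟨w, hE, Set.eq_singleton_iff_unique_mem.mpr ⟨(P.rcv_tok hrcv).2, fun u hu => ?_⟩⟩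
  by_contra huw
  have huv : u ≠ v₁ := by
    rintro rfl
    exact (P.snd_tok hsnd).2 hu
  have hsu : P.tok (s u) := hrest u huv huw ▸ hu
  exact huv (hv.subset hsu)

theorem GStep.exists_tokenHolders_eq_singleton {s s' : G.V → P.Q} {v : G.V}
    (hs : GStep P G s s') (hv : tokenHolders P s = {v}) :
    ∃ w, (v = w ∨ G.E v w) ∧ tokenHolders P s' = {w} := by
  rcases hs with hs | hs
  · exact ⟨v, Or.inl rfl, hs.tokenHolders_eq.trans hv⟩
  · obtain ⟨w, hE, hw⟩ := hs.exists_adj_tokenHolders_eq_singleton hv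
    exact ⟨w, Or.inr hE, hw⟩

theorem isChain_eq_or_adj_of_forall₂ {s : G.V → P.Q} {v : G.V} {ρ : List (G.V → P.Q)}
    {h : List G.V} (hρ : (s :: ρ).IsChain (GStep P G)) (hv : tokenHolders P s = {v})
    (hh : Forall₂ (fun s v => P.tok (s v)) ρ h) :
    (v :: h).IsChain (fun a b => a = b ∨ G.E a b) := by
  induction hh generalizing s v with
  | nil => exact isChain_singleton v
  | @cons s' v' ρ h hv' _ ih =>
    obtain ⟨hstep, hρ⟩ := isChain_cons_cons.mp hρ
    obtain ⟨w, hvw, hw⟩ := hstep.exists_tokenHolders_eq_singleton hv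
    obtain rfl : v' = w := hw.subset hv'
    exact isChain_cons_cons.mpr ⟨hvw, ih hρ hw⟩

end TokenHolders

theorem stmt14_general {A : Type}
    (P : ProcTemplate A) (G : Topo) (x : G.V)
    (ρ : List (G.V → P.Q)) (hρ : IsFinRun P G x ρ)
    (h : List G.V) (hh : List.Forall₂ (fun s v => P.tok (s v)) ρ h) :
    h.head? = some x ∧
    List.Chain' (fun a b => a = b ∨ G.E a b) h ∧
    IsWalkFrom G x (dst h) := by
  obtain ⟨hne, hhead, hsteps⟩ := hρ
  cases hh with
  | nil => exact absurd rfl hne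
  | @cons s₀ v₀ ρ h hv₀ hh =>
    obtain rfl : s₀ = gInit P G x := Option.some_inj.mp hhead
    obtain rfl : v₀ = x := (tokenHolders_gInit x).subset hv₀
    have hchain := isChain_eq_or_adj_of_forall₂ hsteps (tokenHolders_gInit v₀) hh
    exact ⟨rfl, hchain, isWalkFrom_dst rfl hchain⟩

/-- the token itinerary is a walk: if `h` is a holder itinerary
of a finite run (pointwise, `h t` holds the token at time `t`), then `h` starts
at `x`, consecutive holders are equal or joined by an edge, and the
destuttering of `h` is a walk in `G` from `x`. -/
theorem stmt14 {A : Type} [Fintype A] [Nonempty A]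
    (P : ProcTemplate A) (G : Topo) (x : G.V)
    (ρ : List (G.V → P.Q)) (hρ : IsFinRun P G x ρ)
    (h : List G.V) (hh : List.Forall₂ (fun s v => P.tok (s v)) ρ h) :
    h.head? = some x ∧
    List.Chain' (fun a b => a = b ∨ G.E a b) h ∧
    IsWalkFrom G x (dst h) :=
  stmt14_general P G x ρ hρ h hh
end

section
/- (Lifting lemma; core of the Reduction Theorem.) Let P be a process template, let G = (V, E, x) and G' = (V', E', x') be topologies, and let ḡ and ḡ' be k-tuples of pairwise distinct vertices of G and G' with labelings Λ and Λ'. Let s₀ … s_T be a finite run of P^G with holder itinerary h₀ … h_T, and let w₀ … w_M be a walk in G' from x' such that List.destutter (· ≠ ·) [Λ'(w₀), …, Λ'(w_M)] = List.destutter (· ≠ ·) [Λ(h₀), …, Λ(h_T)]. Then there exists a finite run s'₀ … s'_{T'} of P^{G'} such that List.destutter (· ≠ ·) of the ḡ'-projection trace of s'₀ … s'_{T'} equals List.destutter (· ≠ ·) of the ḡ-projection trace of s₀ … s_T. -/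
/-!
The run of `P^{G'}` imitates the run of `P^G` step by step, keeping the two global states
equal on the marked processes and the token at vertices with equal labels. Internal moves
of marked processes are copied and all other internal moves are ignored. A token pass that
changes the holder's label is replayed along the walk: the token is first carried through
the unmarked vertices of the walk, which can always reach a send or a receive by internal
moves because every infinite path of `P` communicates infinitely often, and the last hop
copies the send and receive of the marked endpoints. All other steps are invisible at the
marked processes and only produce stuttering, which `dst` removes.
-/

open Function Relation

section Destutter

variable {α : Type}

lemma dst_cons_cons_of_eq {a b : α} (h : a = b) (l : List α) :
    dst (a :: b :: l) = dst (b :: l) := by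
  subst h
  rw [dst, dst, List.destutter_cons_cons, if_neg (not_not.2 rfl), List.destutter_cons']

lemma dst_cons_cons_of_ne {a b : α} (h : a ≠ b) (l : List α) :
    dst (a :: b :: l) = a :: dst (b :: l) := by
  rw [dst, dst, List.destutter_cons_cons, if_pos h, List.destutter_cons']

lemma head?_dst (l : List α) : (dst l).head? = l.head? := by
  induction l with
  | nil => rfl
  | cons a l ih =>
    cases l with
    | nil => rfl
    | cons b m =>
      by_cases hab : a = b
      · rw [dst_cons_cons_of_eq hab, ih, hab]; rfl
      · rw [dst_cons_cons_of_ne hab]; rfl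

lemma dst_cons_ne_nil (a : α) (l : List α) : dst (a :: l) ≠ [] :=
  fun h => by simpa [h] using head?_dst (a :: l)

lemma dst_cons_congr (a : α) {l₁ l₂ : List α} (h : dst l₁ = dst l₂) :
    dst (a :: l₁) = dst (a :: l₂) := by
  have hhead : l₁.head? = l₂.head? := by rw [← head?_dst, h, head?_dst]
  match l₁, l₂, hhead with
  | [], [], _ => rfl
  | b :: m₁, _ :: m₂, rfl =>
    by_cases hab : a = b
    · rwa [dst_cons_cons_of_eq hab, dst_cons_cons_of_eq hab]
    · rw [dst_cons_cons_of_ne hab, dst_cons_cons_of_ne hab, h]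

end Destutter

section Template

variable {A : Type} (P : ProcTemplate A)

def IntPath : P.Q → P.Q → Prop :=
  ReflTransGen fun q q' => ∃ a, P.δ q (Act.int a) q'

variable {P}

lemma IntPath.tok_iff {q q' : P.Q} (h : IntPath P q q') : P.tok q ↔ P.tok q' := by
  induction h with
  | refl => rfl
  | tail _ hstep ih =>
    obtain ⟨a, ha⟩ := hstep
    exact ih.trans (P.int_tok ha)

lemma exists_intPath_comm (q : P.Q) :
    ∃ q₁ σ q₂, IntPath P q q₁ ∧ (σ = Act.snd ∨ σ = Act.rcv) ∧ P.δ q₁ σ q₂ := by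
  by_contra! hint
  have hnext : ∀ p : {p // IntPath P q p}, ∃ σ, ∃ p' : {p // IntPath P q p}, P.δ p σ p' := by
    rintro ⟨p, hp⟩
    obtain ⟨σ, p', hσ⟩ := P.total p
    cases σ with
    | int a => exact ⟨_, ⟨p', hp.tail ⟨a, hσ⟩⟩, hσ⟩
    | snd => exact absurd hσ (hint p _ p' hp (.inl rfl))
    | rcv => exact absurd hσ (hint p _ p' hp (.inr rfl))
  choose σ nxt hδ using hnext
  let f : ℕ → {p // IntPath P q p} := fun n => nxt^[n] ⟨q, .refl⟩
  obtain ⟨hcomm, -, -⟩ := P.alternation (fun n => (f n).1) (fun n => σ (f n)) fun n => by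
    simpa only [f, iterate_succ_apply'] using hδ (f n)
  obtain ⟨t, -, ht⟩ := hcomm 0
  exact hint _ _ _ (f t).2 ht (hδ (f t))

lemma exists_intPath_snd {q : P.Q} (hq : P.tok q) :
    ∃ q₁ q₂, IntPath P q q₁ ∧ P.δ q₁ Act.snd q₂ := by
  obtain ⟨q₁, σ, q₂, hpath, rfl | rfl, hδ⟩ := exists_intPath_comm q
  · exact ⟨q₁, q₂, hpath, hδ⟩
  · exact absurd (hpath.tok_iff.1 hq) (P.rcv_tok hδ).1

lemma exists_intPath_rcv {q : P.Q} (hq : ¬P.tok q) :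
    ∃ q₁ q₂, IntPath P q q₁ ∧ P.δ q₁ Act.rcv q₂ := by
  obtain ⟨q₁, σ, q₂, hpath, rfl | rfl, hδ⟩ := exists_intPath_comm q
  · exact absurd (hpath.tok_iff.2 (P.snd_tok hδ).1) hq
  · exact ⟨q₁, q₂, hpath, hδ⟩

end Template

section Lab

variable {k : ℕ}

lemma lab_eq_lab_iff {G G' : Topo} {g : Fin k → G.V} {g' : Fin k → G'.V} {u : G.V} {u' : G'.V} :
    lab G g u = lab G' g' u' ↔ ∀ i, g i = u ↔ g' i = u' := by
  simp [lab, Finset.ext_iff]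

lemma lab_apply_self {G : Topo} {g : Fin k → G.V} (hg : Injective g) (i : Fin k) :
    lab G g (g i) = {i} := by
  ext j
  simp [lab, hg.eq_iff]

lemma update_comp_eq_update_comp {β : Type} {G G' : Topo} {g : Fin k → G.V} {g' : Fin k → G'.V}
    {s : G.V → β} {s' : G'.V → β} (h : s' ∘ g' = s ∘ g) {u : G.V} {u' : G'.V}
    (hu : lab G' g' u' = lab G g u) (q : β) : update s' u' q ∘ g' = update s u q ∘ g := by
  funext i
  have hi := lab_eq_lab_iff.1 hu i
  by_cases hiu : g' i = u'
  · simp [hiu, hi.1 hiu]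
  · simpa [update_of_ne hiu, update_of_ne (mt hi.2 hiu)] using congrFun h i

lemma apply_ne_of_adj_of_lab_eq {G : Topo} {g : Fin k → G.V} {v w : G.V} (hvw : G.E v w)
    (hlab : lab G g v = lab G g w) (i : Fin k) : g i ≠ v ∧ g i ≠ w := by
  have hwv : w ≠ v := fun h => G.no_self_loops v (h ▸ hvw)
  have hi := lab_eq_lab_iff.1 hlab i
  exact ⟨fun hv => hwv ((hi.1 hv).symm.trans hv), fun hw => hwv (hw.symm.trans (hi.2 hw))⟩

end Lab

section System

variable {A : Type} (P : ProcTemplate A) (G : Topo) {k : ℕ} (g : Fin k → G.V)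

def IsHolder (s : G.V → P.Q) (v : G.V) : Prop :=
  ∀ u, P.tok (s u) ↔ u = v

def SilentStep (s t : G.V → P.Q) : Prop :=
  GStep P G s t ∧ t ∘ g = s ∘ g

def SilentThenStep (s t : G.V → P.Q) : Prop :=
  ∃ r, ReflTransGen (SilentStep P G g) s r ∧ ReflGen (GStep P G) r t

def RealizesTrace (s : G.V → P.Q) (T : List (Fin k → P.Q)) : Prop :=
  ∃ ρ, List.IsChain (GStep P G) (s :: ρ) ∧ dst (projTrace P G g (s :: ρ)) = dst T

variable {P G g}

lemma isHolder_gInit (x : G.V) : IsHolder P G (gInit P G x) x := by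
  intro u
  by_cases hu : u = x
  · simp [gInit, hu, P.tok_iotaT]
  · simp [gInit, hu, P.not_tok_iotaN]

lemma IsHolder.of_int {s s₂ : G.V → P.Q} {v u : G.V} {a : A} (hs : IsHolder P G s v)
    (hδ : P.δ (s u) (Act.int a) (s₂ u)) (hoth : ∀ x, x ≠ u → s₂ x = s x) :
    IsHolder P G s₂ v := by
  intro x
  by_cases hx : x = u
  · subst hx
    exact (P.int_tok hδ).symm.trans (hs x)
  · rw [hoth x hx, hs x]

lemma IsHolder.pass {s s₂ : G.V → P.Q} {v w : G.V} (hs : IsHolder P G s v)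
    (hv : ¬P.tok (s₂ v)) (hw : P.tok (s₂ w)) (hoth : ∀ u, u ≠ v → u ≠ w → s₂ u = s u) :
    IsHolder P G s₂ w := by
  intro u
  by_cases huw : u = w
  · simpa [huw] using hw
  by_cases huv : u = v
  · subst huv
    simpa [huw] using hv
  · simpa [hoth u huv huw, huw] using (hs u).not.2 huv

lemma gInit_comp_eq {G' : Topo} {g' : Fin k → G'.V} {x : G.V} {x' : G'.V}
    (h : lab G' g' x' = lab G g x) : gInit P G' x' ∘ g' = gInit P G x ∘ g := by
  funext i
  simp [gInit, lab_eq_lab_iff.1 h i]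

lemma comp_eq_of_silent {s t : G.V → P.Q} (h : ReflTransGen (SilentStep P G g) s t) :
    t ∘ g = s ∘ g := by
  induction h with
  | refl => rfl
  | tail _ hstep ih => exact hstep.2.trans ih

lemma reflTransGen_silentStep_update {s : G.V → P.Q} {a : G.V} (ha : a ∉ Set.range g)
    {q : P.Q} (hq : IntPath P (s a) q) : ReflTransGen (SilentStep P G g) s (update s a q) := by
  have hunm : ∀ i, g i ≠ a := fun i hi => ha ⟨i, hi⟩
  induction hq with
  | refl => simpa using ReflTransGen.refl
  | tail _ hstep ih =>
    obtain ⟨α, hα⟩ := hstep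
    refine ih.tail ⟨Or.inl ⟨a, α, by simpa using hα, fun u hu => by simp [update_of_ne hu]⟩, ?_⟩
    rw [update_comp_eq_of_forall_ne _ _ hunm, update_comp_eq_of_forall_ne _ _ hunm]

lemma exists_silent_ready {s : G.V → P.Q} {a : G.V} {σ : Act A}
    (hσ : ∃ q₁ q₂, IntPath P (s a) q₁ ∧ P.δ q₁ σ q₂) {q : P.Q}
    (hq : a ∈ Set.range g → P.δ (s a) σ q) :
    ∃ t q', ReflTransGen (SilentStep P G g) s t ∧ (∀ u, u ≠ a → t u = s u) ∧
      P.δ (t a) σ q' ∧ (a ∈ Set.range g → q' = q) := by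
  by_cases ha : a ∈ Set.range g
  · exact ⟨s, q, .refl, fun _ _ => rfl, hq ha, fun _ => rfl⟩
  · obtain ⟨q₁, q₂, hpath, hδ⟩ := hσ
    exact ⟨update s a q₁, q₂, reflTransGen_silentStep_update ha hpath,
      fun u hu => update_of_ne hu _ _, by simpa using hδ, fun h => absurd h ha⟩

lemma exists_hop {s : G.V → P.Q} {a b : G.V} (hs : IsHolder P G s a) (hab : G.E a b)
    {qa qb : P.Q} (ha : a ∈ Set.range g → P.δ (s a) Act.snd qa)
    (hb : b ∈ Set.range g → P.δ (s b) Act.rcv qb) :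
    ∃ t t', ReflTransGen (SilentStep P G g) s t ∧ GStep P G t t' ∧ IsHolder P G t' b ∧
      t' ∘ g = update (update s a qa) b qb ∘ g := by
  have hba : b ≠ a := fun h => G.no_self_loops a (h ▸ hab)
  obtain ⟨s₁, qa', hs₁, hs₁eq, hsnd, hqa⟩ :=
    exists_silent_ready (exists_intPath_snd ((hs a).2 rfl)) ha
  rw [← hs₁eq b hba] at hb
  obtain ⟨s₂, qb', hs₂, hs₂eq, hrcv, hqb⟩ :=
    exists_silent_ready (exists_intPath_rcv (by rw [hs₁eq b hba, hs b]; exact hba)) hb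
  rw [← hs₂eq a hba.symm] at hsnd
  have hoth : ∀ u, u ≠ a → u ≠ b → update (update s₂ a qa') b qb' u = s u := fun u hua hub => by
    rw [update_of_ne hub, update_of_ne hua, hs₂eq u hub, hs₁eq u hua]
  refine ⟨s₂, update (update s₂ a qa') b qb', hs₁.trans hs₂,
    Or.inr ⟨a, b, hab, by simpa [update_of_ne hba.symm] using hsnd, by simpa using hrcv,
      fun u hua hub => by rw [update_of_ne hub, update_of_ne hua]⟩,
    hs.pass (by simpa [update_of_ne hba.symm] using (P.snd_tok hsnd).2)
      (by simpa using (P.rcv_tok hrcv).2) hoth, ?_⟩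
  funext i
  by_cases hib : g i = b
  · simp [hib, hqb ⟨i, hib⟩]
  by_cases hia : g i = a
  · simp [hia, update_of_ne hba.symm, hqa ⟨i, hia⟩]
  · simp [hoth _ hia hib, update_of_ne hia, update_of_ne hib]

end System

section Trace

variable {A : Type} {P : ProcTemplate A} {G : Topo} {k : ℕ} {g : Fin k → G.V}

lemma realizesTrace_singleton {s : G.V → P.Q} {p : Fin k → P.Q} (h : s ∘ g = p) :
    RealizesTrace P G g s [p] :=
  ⟨[], List.isChain_singleton _, by rw [← h]; rfl⟩

lemma RealizesTrace.cons {s t : G.V → P.Q} {T : List (Fin k → P.Q)} (hst : GStep P G s t)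
    (ht : RealizesTrace P G g t T) : RealizesTrace P G g s (s ∘ g :: T) := by
  obtain ⟨ρ, hρ, hT⟩ := ht
  exact ⟨t :: ρ, hρ.cons_cons hst, dst_cons_congr _ hT⟩

lemma RealizesTrace.of_silent {s t : G.V → P.Q} {T : List (Fin k → P.Q)}
    (hst : ReflTransGen (SilentStep P G g) s t) (ht : RealizesTrace P G g t T) :
    RealizesTrace P G g s T := by
  induction hst using ReflTransGen.head_induction_on with
  | refl => exact ht
  | head hstep _ ih =>
    obtain ⟨ρ, hρ, hT⟩ := ih
    exact ⟨_ :: ρ, hρ.cons_cons hstep.1, (dst_cons_cons_of_eq hstep.2.symm _).trans hT⟩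

lemma RealizesTrace.of_silentThenStep {s s₂ : G.V → P.Q} {p p₂ : Fin k → P.Q}
    {T : List (Fin k → P.Q)} (h : SilentThenStep P G g s s₂) (hs : s ∘ g = p) (hs₂ : s₂ ∘ g = p₂)
    (ht : RealizesTrace P G g s₂ (p₂ :: T)) : RealizesTrace P G g s (p :: p₂ :: T) := by
  subst hs hs₂
  obtain ⟨r, hsr, hr⟩ := h
  refine .of_silent hsr ?_
  rw [← comp_eq_of_silent hsr]
  cases hr with
  | refl =>
    obtain ⟨ρ, hρ, hT⟩ := ht
    exact ⟨ρ, hρ, hT.trans (dst_cons_cons_of_eq rfl _).symm⟩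
  | single hstep => exact ht.cons hstep

end Trace

section Lifting

variable {A : Type} {P : ProcTemplate A} {k : ℕ}

/-- Adjacent vertices with equal labels are unmarked (there are no self-loops), so every hop
along a stretch of constant label is silent. -/
lemma exists_silent_route {G : Topo} {g : Fin k → G.V} {M : List (Finset (Fin k))} :
    ∀ (wr : List G.V) (s : G.V → P.Q) (a : G.V), IsHolder P G s a →
      List.IsChain G.E (a :: wr) → dst ((a :: wr).map (lab G g)) = lab G g a :: M → M ≠ [] →
      ∃ t u b wr', ReflTransGen (SilentStep P G g) s t ∧ IsHolder P G t u ∧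
        lab G g u = lab G g a ∧ G.E u b ∧ List.IsChain G.E (b :: wr') ∧
        dst ((b :: wr').map (lab G g)) = M := by
  intro wr
  induction wr with
  | nil =>
    intro s a _ _ hlab hM
    exact absurd (List.cons.inj hlab).2.symm hM
  | cons y wr ih =>
    intro s a hs hwalk hlab hM
    have hay : G.E a y := hwalk.rel
    by_cases hya : lab G g y = lab G g a
    · have hunm := apply_ne_of_adj_of_lab_eq hay hya.symm
      obtain ⟨t₀, t₁, ht₀, hstep, ht₁, hproj⟩ :=
        exists_hop (g := g) (qa := s a) (qb := s y) hs hay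
          (fun ⟨i, hi⟩ => absurd hi (hunm i).1) (fun ⟨i, hi⟩ => absurd hi (hunm i).2)
      have hsilent : SilentStep P G g t₀ t₁ := by
        refine ⟨hstep, ?_⟩
        rw [hproj, comp_eq_of_silent ht₀,
          update_comp_eq_of_forall_ne _ _ fun i => (hunm i).2,
          update_comp_eq_of_forall_ne _ _ fun i => (hunm i).1]
      rw [List.map_cons, List.map_cons, dst_cons_cons_of_eq hya.symm, hya.symm] at hlab
      obtain ⟨t, u, b, wr', ht, hu, hlu, hub, hwalk', hlab'⟩ := ih t₁ y ht₁ hwalk.tail hlab hM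
      exact ⟨t, u, b, wr', (ht₀.tail hsilent).trans ht, hu, hlu.trans hya, hub, hwalk', hlab'⟩
    · rw [List.map_cons, List.map_cons, dst_cons_cons_of_ne (Ne.symm hya)] at hlab
      exact ⟨s, a, y, wr, .refl, hs, rfl, hay, hwalk.tail, (List.cons.inj hlab).2⟩

variable {G G' : Topo} {g : Fin k → G.V} {g' : Fin k → G'.V}

lemma exists_mirror_pass {s : G.V → P.Q} {v w : G.V} {qv qw : P.Q}
    (hsnd : P.δ (s v) Act.snd qv) (hrcv : P.δ (s w) Act.rcv qw)
    (hvw : lab G g v ≠ lab G g w) {s' : G'.V → P.Q} {a : G'.V} {wr : List G'.V}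
    {L : List (Finset (Fin k))} (ha : IsHolder P G' s' a) (hproj : s' ∘ g' = s ∘ g)
    (hwalk : List.IsChain G'.E (a :: wr))
    (hlab : dst ((a :: wr).map (lab G' g')) = dst (lab G g v :: lab G g w :: L)) :
    ∃ t t' b wr', ReflTransGen (SilentStep P G' g') s' t ∧ GStep P G' t t' ∧
      IsHolder P G' t' b ∧ t' ∘ g' = update (update s v qv) w qw ∘ g ∧
      List.IsChain G'.E (b :: wr') ∧ dst ((b :: wr').map (lab G' g')) = dst (lab G g w :: L) := by
  rw [dst_cons_cons_of_ne hvw] at hlab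
  have hav : lab G' g' a = lab G g v := by
    simpa [head?_dst] using congrArg List.head? hlab
  rw [← hav] at hlab
  obtain ⟨t, u, b, wr', ht, hu, hua, hub, hwalk', hlab'⟩ := exists_silent_route wr s' a ha
    hwalk hlab (dst_cons_ne_nil _ _)
  have hbw : lab G' g' b = lab G g w := by
    simpa [head?_dst] using congrArg List.head? hlab'
  have huv : lab G' g' u = lab G g v := hua.trans hav
  have htproj : t ∘ g' = s ∘ g := (comp_eq_of_silent ht).trans hproj
  obtain ⟨t₁, t', ht₁, hstep, hb, hproj'⟩ := exists_hop (g := g') (qa := qv) (qb := qw) hu hub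
    (fun ⟨i, hi⟩ => by
      rwa [← hi, show t (g' i) = s (g i) from congrFun htproj i, (lab_eq_lab_iff.1 huv i).1 hi])
    (fun ⟨i, hi⟩ => by
      rwa [← hi, show t (g' i) = s (g i) from congrFun htproj i, (lab_eq_lab_iff.1 hbw i).1 hi])
  refine ⟨t₁, t', b, wr', ht.trans ht₁, hstep, hb, ?_, hwalk', hlab'⟩
  rw [hproj', update_comp_eq_update_comp (update_comp_eq_update_comp htproj huv _) hbw]

lemma exists_mirror_tokTrans {s s₂ : G.V → P.Q} {v w : G.V} (hvw : G.E v w)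
    (hsnd : P.δ (s v) Act.snd (s₂ v)) (hrcv : P.δ (s w) Act.rcv (s₂ w))
    (hoth : ∀ u, u ≠ v → u ≠ w → s₂ u = s u) {s' : G'.V → P.Q} {a : G'.V} {wr : List G'.V}
    {L : List (Finset (Fin k))} (ha : IsHolder P G' s' a) (hproj : s' ∘ g' = s ∘ g)
    (hwalk : List.IsChain G'.E (a :: wr))
    (hlab : dst ((a :: wr).map (lab G' g')) = dst (lab G g v :: lab G g w :: L)) :
    ∃ s'₂ b wr', SilentThenStep P G' g' s' s'₂ ∧ IsHolder P G' s'₂ b ∧ s'₂ ∘ g' = s₂ ∘ g ∧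
      List.IsChain G'.E (b :: wr') ∧ dst ((b :: wr').map (lab G' g')) = dst (lab G g w :: L) := by
  have hs₂ : s₂ = update (update s v (s₂ v)) w (s₂ w) := by
    funext u
    by_cases huw : u = w
    · simp [huw]
    by_cases huv : u = v
    · have hwv : w ≠ v := fun h => G.no_self_loops v (h ▸ hvw)
      rw [huv, update_of_ne hwv.symm, update_self]
    · simp [huv, huw, hoth]
  by_cases hlvw : lab G g v = lab G g w
  · have hunm := apply_ne_of_adj_of_lab_eq hvw hlvw
    refine ⟨s', a, wr, ⟨s', .refl, .refl⟩, ha, ?_, hwalk, ?_⟩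
    · rw [hproj, hs₂, update_comp_eq_of_forall_ne _ _ fun i => (hunm i).2,
        update_comp_eq_of_forall_ne _ _ fun i => (hunm i).1]
    · rwa [dst_cons_cons_of_eq hlvw] at hlab
  · obtain ⟨t, t', b, wr', ht, hstep, hb, hproj', hwalk', hlab'⟩ :=
      exists_mirror_pass hsnd hrcv hlvw ha hproj hwalk hlab
    exact ⟨t', b, wr', ⟨t, ht, .single hstep⟩, hb, hproj'.trans (congrArg (· ∘ g) hs₂.symm),
      hwalk', hlab'⟩

lemma exists_mirror_int (hg : Injective g) (hg' : Injective g') {s s₂ : G.V → P.Q} {u : G.V}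
    {α : A} (hδ : P.δ (s u) (Act.int α) (s₂ u)) (hoth : ∀ x, x ≠ u → s₂ x = s x)
    {s' : G'.V → P.Q} {a : G'.V} (ha : IsHolder P G' s' a) (hproj : s' ∘ g' = s ∘ g) :
    ∃ s'₂, SilentThenStep P G' g' s' s'₂ ∧ IsHolder P G' s'₂ a ∧ s'₂ ∘ g' = s₂ ∘ g := by
  have hs₂ : s₂ = update s u (s₂ u) := by
    funext x
    by_cases hx : x = u
    · simp [hx]
    · simp [hx, hoth x hx]
  by_cases hu : u ∈ Set.range g
  · obtain ⟨i, rfl⟩ := hu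
    have hδ' : P.δ (s' (g' i)) (Act.int α) (s₂ (g i)) := by
      rwa [show s' (g' i) = s (g i) from congrFun hproj i]
    have hoth' : ∀ x, x ≠ g' i → update s' (g' i) (s₂ (g i)) x = s' x :=
      fun x hx => update_of_ne hx _ _
    refine ⟨update s' (g' i) (s₂ (g i)),
      ⟨s', .refl, .single (Or.inl ⟨g' i, α, by simpa using hδ', hoth'⟩)⟩,
      ha.of_int (by simpa using hδ') hoth', ?_⟩
    rw [update_comp_eq_update_comp hproj ((lab_apply_self hg' i).trans (lab_apply_self hg i).symm),
      ← hs₂]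
  · refine ⟨s', ⟨s', .refl, .refl⟩, ha, ?_⟩
    rw [hproj, hs₂, update_comp_eq_of_forall_ne _ _ fun i hi => hu ⟨i, hi⟩]

lemma exists_mirror_step (hg : Injective g) (hg' : Injective g') {s s₂ : G.V → P.Q}
    {v v₂ : G.V} (hstep : GStep P G s s₂) (hv : IsHolder P G s v) (hv₂ : P.tok (s₂ v₂))
    {s' : G'.V → P.Q} {a : G'.V} {wr : List G'.V} {L : List (Finset (Fin k))}
    (ha : IsHolder P G' s' a) (hproj : s' ∘ g' = s ∘ g) (hwalk : List.IsChain G'.E (a :: wr))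
    (hlab : dst ((a :: wr).map (lab G' g')) = dst (lab G g v :: lab G g v₂ :: L)) :
    IsHolder P G s₂ v₂ ∧ ∃ s'₂ a₂ wr₂, SilentThenStep P G' g' s' s'₂ ∧
      IsHolder P G' s'₂ a₂ ∧ s'₂ ∘ g' = s₂ ∘ g ∧ List.IsChain G'.E (a₂ :: wr₂) ∧
      dst ((a₂ :: wr₂).map (lab G' g')) = dst (lab G g v₂ :: L) := by
  rcases hstep with ⟨u, α, hδ, hoth⟩ | ⟨v₀, w, hE, hsnd, hrcv, hoth⟩
  · have hs₂ : IsHolder P G s₂ v := hv.of_int hδ hoth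
    obtain rfl : v₂ = v := (hs₂ v₂).1 hv₂
    obtain ⟨s'₂, hlift, ha₂, hproj₂⟩ := exists_mirror_int hg hg' hδ hoth ha hproj
    rw [dst_cons_cons_of_eq rfl] at hlab
    exact ⟨hs₂, s'₂, a, wr, hlift, ha₂, hproj₂, hwalk, hlab⟩
  · obtain rfl : v₀ = v := (hv v₀).1 (P.snd_tok hsnd).1
    have hs₂ : IsHolder P G s₂ w := hv.pass (P.snd_tok hsnd).2 (P.rcv_tok hrcv).2 hoth
    obtain rfl : v₂ = w := (hs₂ v₂).1 hv₂
    exact ⟨hs₂, exists_mirror_tokTrans hE hsnd hrcv hoth ha hproj hwalk hlab⟩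

lemma realizesTrace_of_isChain (hg : Injective g) (hg' : Injective g') :
    ∀ (tl : List (G.V → P.Q)) (htl : List G.V) (s : G.V → P.Q) (v : G.V) (s' : G'.V → P.Q)
      (a : G'.V) (wr : List G'.V), List.IsChain (GStep P G) (s :: tl) →
      List.Forall₂ (fun t u => P.tok (t u)) tl htl → IsHolder P G s v → IsHolder P G' s' a →
      s' ∘ g' = s ∘ g → List.IsChain G'.E (a :: wr) →
      dst ((a :: wr).map (lab G' g')) = dst ((v :: htl).map (lab G g)) →
      RealizesTrace P G' g' s' (projTrace P G g (s :: tl)) := by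
  intro tl
  induction tl with
  | nil =>
    intro _ s _ s' _ _ _ _ _ _ hproj _ _
    exact realizesTrace_singleton hproj
  | cons s₂ tl ih =>
    intro htl s v s' a wr hrun hitin hv ha hproj hwalk hlab
    obtain ⟨v₂, htl₂, hv₂, hitin₂, rfl⟩ := List.forall₂_cons_left_iff.1 hitin
    obtain ⟨hs₂, s'₂, a₂, wr₂, hlift, ha₂, hproj₂, hwalk₂, hlab₂⟩ :=
      exists_mirror_step hg hg' hrun.rel hv hv₂ ha hproj hwalk hlab
    exact (ih htl₂ s₂ v₂ s'₂ a₂ wr₂ hrun.tail hitin₂ hs₂ ha₂ hproj₂ hwalk₂ hlab₂).of_silentThenStep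
      hlift hproj hproj₂

end Lifting

theorem stmt15_general {A : Type} {k : ℕ}
    (P : ProcTemplate A) (G G' : Topo) (x : G.V) (x' : G'.V)
    (g : Fin k → G.V) (hg : Function.Injective g)
    (g' : Fin k → G'.V) (hg' : Function.Injective g')
    (ρ : List (G.V → P.Q)) (hρ : IsFinRun P G x ρ)
    (h : List G.V) (hh : List.Forall₂ (fun s v => P.tok (s v)) ρ h)
    (w : List G'.V) (hw : IsWalkFrom G' x' w)
    (hlab : dst (w.map (lab G' g')) = dst (h.map (lab G g))) :
    ∃ ρ' : List (G'.V → P.Q), IsFinRun P G' x' ρ' ∧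
      dst (projTrace P G' g' ρ') = dst (projTrace P G g ρ) := by
  obtain ⟨-, hρ₀, hrun⟩ := hρ
  obtain ⟨tl, rfl⟩ := List.head?_eq_some_iff.1 hρ₀
  obtain ⟨-, hw₀, hwalk⟩ := hw
  obtain ⟨wr, rfl⟩ := List.head?_eq_some_iff.1 hw₀
  obtain ⟨h₀, htl, hh₀, hitin, rfl⟩ := List.forall₂_cons_left_iff.1 hh
  obtain rfl : x = h₀ := ((isHolder_gInit x h₀).1 hh₀).symm
  have hx : lab G' g' x' = lab G g x := by simpa [head?_dst] using congrArg List.head? hlab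
  obtain ⟨ρ', hrun', htrace⟩ := realizesTrace_of_isChain hg hg' tl htl _ x _ x' wr hrun hitin
    (isHolder_gInit x) (isHolder_gInit x') (gInit_comp_eq hx) hwalk hlab
  exact ⟨gInit P G' x' :: ρ', ⟨List.cons_ne_nil _ _, rfl, hrun'⟩, htrace⟩

/-- lifting lemma, core of the Reduction Theorem: if a walk `w`
in `G'` from `x'` has the same destuttered label-sequence as the holder
itinerary `h` of a finite run `ρ` of `P^G`, then there is a finite run `ρ'` of
`P^{G'}` whose destuttered `ḡ'`-projection trace equals the destuttered
`ḡ`-projection trace of `ρ`. -/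
theorem stmt15 {A : Type} [Fintype A] [Nonempty A] {k : ℕ}
    (P : ProcTemplate A) (G G' : Topo) (x : G.V) (x' : G'.V)
    (g : Fin k → G.V) (hg : Function.Injective g)
    (g' : Fin k → G'.V) (hg' : Function.Injective g')
    (ρ : List (G.V → P.Q)) (hρ : IsFinRun P G x ρ)
    (h : List G.V) (hh : List.Forall₂ (fun s v => P.tok (s v)) ρ h)
    (w : List G'.V) (hw : IsWalkFrom G' x' w)
    (hlab : dst (w.map (lab G' g')) = dst (h.map (lab G g))) :
    ∃ ρ' : List (G'.V → P.Q), IsFinRun P G' x' ρ' ∧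
      dst (projTrace P G' g' ρ') = dst (projTrace P G g ρ) :=
  stmt15_general P G G' x x' g hg g' hg' ρ hρ h hh w hw hlab
end
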